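/- Let F be a field, k ≥ 1 an integer, a_0,…,a_k, b_0,…,b_k ∈ F and g_n : F → F functions for n ≥ 0. Suppose ρ ∈ F is nonzero with P(ρ) = 0 and Q(ρ) = 0. If (t_n)_{n ≥ −k+1} is any solution of the factor equation (FE) with root ρ, and (x_n)_{n ≥ −k} is defined from an arbitrary value x_{−k} ∈ F by x_n = ρ x_{n−1} + t_n for all n ≥ −k+1, then (x_n) is a solution of equation (★). -/
import Mathlib


open Finset Polynomial

/-- The polynomial `P(u) = u^(k+1) - ∑_{i=0}^{k} a_i u^(k-i)`. -/
noncomputable def polyP {F : Type*} [Field F] (k : ℕ) (a : ℕ → F) : Polynomial F :=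
  X ^ (k + 1) - ∑ i ∈ range (k + 1), C (a i) * X ^ (k - i)

/-- The polynomial `Q(u) = ∑_{i=0}^{k} b_i u^(k-i)`. -/
noncomputable def polyQ {F : Type*} [Field F] (k : ℕ) (b : ℕ → F) : Polynomial F :=
  ∑ i ∈ range (k + 1), C (b i) * X ^ (k - i)

/-- `p_i = ρ^(i+1) - a_0 ρ^i - a_1 ρ^(i-1) - ⋯ - a_i`. -/
def coefp {F : Type*} [Field F] (a : ℕ → F) (ρ : F) (i : ℕ) : F :=
  ρ ^ (i + 1) - ∑ m ∈ range (i + 1), a m * ρ ^ (i - m)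

/-- `q_i = b_0 ρ^i + b_1 ρ^(i-1) + ⋯ + b_i`. -/
def coefq {F : Type*} [Field F] (b : ℕ → F) (ρ : F) (i : ℕ) : F :=
  ∑ m ∈ range (i + 1), b m * ρ ^ (i - m)

/-- A sequence `x : ℤ → F` is a solution of equation (★):
`x_{n+1} = ∑_{i=0}^{k} a_i x_{n-i} + g_n (∑_{i=0}^{k} b_i x_{n-i})` for all `n ≥ 0`. -/
def IsSolutionStar {F : Type*} [Field F] (k : ℕ) (a b : ℕ → F) (g : ℤ → F → F)
    (x : ℤ → F) : Prop :=
  ∀ n : ℤ, 0 ≤ n →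
    x (n + 1) = (∑ i ∈ range (k + 1), a i * x (n - i)) +
      g n (∑ i ∈ range (k + 1), b i * x (n - i))

/-- A sequence `t : ℤ → F` is a solution of the factor equation (FE) with root `ρ`:
`t_{n+1} = -∑_{i=0}^{k-1} p_i t_{n-i} + g_n (∑_{i=0}^{k-1} q_i t_{n-i})` for all `n ≥ 0`. -/
def IsSolutionFE {F : Type*} [Field F] (k : ℕ) (a b : ℕ → F) (g : ℤ → F → F) (ρ : F)
    (t : ℤ → F) : Prop :=
  ∀ n : ℤ, 0 ≤ n →
    t (n + 1) = -(∑ i ∈ range k, coefp a ρ i * t (n - i)) +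
      g n (∑ i ∈ range k, coefq b ρ i * t (n - i))

lemma coefq_succ {F : Type*} [Field F] (b : ℕ → F) (ρ : F) (i : ℕ) :
    coefq b ρ (i+1) = ρ * coefq b ρ i + b (i+1) := by
  unfold coefq
  rw [Finset.sum_range_succ, Finset.mul_sum]
  congr 1
  · refine Finset.sum_congr rfl fun m hm => ?_
    rw [Finset.mem_range] at hm
    have h : i + 1 - m = (i - m) + 1 := by omega
    rw [h, pow_succ]; ring
  · simp

lemma coefp_succ {F : Type*} [Field F] (a : ℕ → F) (ρ : F) (i : ℕ) :
    coefp a ρ (i+1) = ρ * coefp a ρ i - a (i+1) := by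
  unfold coefp
  rw [Finset.sum_range_succ]
  have h : ∑ m ∈ range (i+1), a m * ρ ^ (i+1-m) = ρ * ∑ m ∈ range (i+1), a m * ρ ^ (i-m) := by
    rw [Finset.mul_sum]
    refine Finset.sum_congr rfl fun m hm => ?_
    rw [Finset.mem_range] at hm
    have h2 : i + 1 - m = (i - m) + 1 := by omega
    rw [h2, pow_succ]; ring
  rw [h]
  simp [pow_succ]
  ring

lemma polyP_eval {F : Type*} [Field F] (k : ℕ) (a : ℕ → F) (ρ : F) :
    (polyP k a).eval ρ = coefp a ρ k := by
  simp [polyP, coefp, eval_finset_sum]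

lemma polyQ_eval {F : Type*} [Field F] (k : ℕ) (b : ℕ → F) (ρ : F) :
    (polyQ k b).eval ρ = coefq b ρ k := by
  simp [polyQ, coefq, eval_finset_sum]

/-- conversely, if `ρ ≠ 0` is a common root of `P` and `Q`, `t` solves the
factor equation (FE), and `x` is generated from an arbitrary `x_{-k}` by
`x_n = ρ x_{n-1} + t_n` for `n ≥ -k+1`, then `x` solves (★). -/
theorem statement1 {F : Type*} [Field F] (k : ℕ) (hk : 1 ≤ k)
    (a b : ℕ → F) (g : ℤ → F → F) (ρ : F) (hρ : ρ ≠ 0)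
    (hP : (polyP k a).eval ρ = 0) (hQ : (polyQ k b).eval ρ = 0)
    (t : ℤ → F) (ht : IsSolutionFE k a b g ρ t)
    (x : ℤ → F) (hx : ∀ n : ℤ, -(k : ℤ) + 1 ≤ n → x n = ρ * x (n - 1) + t n) :
    IsSolutionStar k a b g x := by
  intro n hn
  have hpk : coefp a ρ k = 0 := by rw [← polyP_eval, hP]
  have hqk : coefq b ρ k = 0 := by rw [← polyQ_eval, hQ]
  have ht' : ∀ m : ℤ, -(k:ℤ) + 1 ≤ m → t m = x m - ρ * x (m-1) := by
    intro m hm; rw [hx m hm]; ring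
  have key : ∀ j : ℕ, 1 ≤ j → j ≤ k →
      (∑ i ∈ range j, coefq b ρ i * t (n - i)
        = (∑ i ∈ range j, b i * x (n - i)) - ρ * coefq b ρ (j-1) * x (n - j))
      ∧ (∑ i ∈ range j, coefp a ρ i * t (n - i)
        = ρ * x n - (∑ i ∈ range j, a i * x (n - i)) - ρ * coefp a ρ (j-1) * x (n - j)) := by
    intro j hj
    induction j, hj using Nat.le_induction with
    | base =>
      intro _
      have h0 : t n = x n - ρ * x (n-1) := ht' n (by push_cast; omega)
      constructor
      · simp only [coefq, zero_add, Finset.sum_range_one, Nat.sub_self, pow_zero, mul_one,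
          Nat.cast_zero, sub_zero, Nat.cast_one]
        rw [h0]; ring
      · simp only [coefp, zero_add, Finset.sum_range_one, Nat.sub_self, pow_zero, mul_one,
          Nat.cast_zero, sub_zero, Nat.cast_one]
        rw [h0]; ring
    | succ j hj ih =>
      intro hjk
      obtain ⟨ihq, ihp⟩ := ih (by omega)
      have htj : t (n - j) = x (n - j) - ρ * x (n - j - 1) := ht' _ (by push_cast; omega)
      have hsub : (n : ℤ) - j - 1 = n - (j+1 : ℕ) := by push_cast; ring
      have hj1 : j - 1 + 1 = j := by omega
      have hqrec : coefq b ρ j = ρ * coefq b ρ (j-1) + b j := by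
        conv_lhs => rw [← hj1]
        rw [coefq_succ, hj1]
      have hprec : coefp a ρ j = ρ * coefp a ρ (j-1) - a j := by
        conv_lhs => rw [← hj1]
        rw [coefp_succ, hj1]
      rw [hsub] at htj
      constructor
      · rw [Finset.sum_range_succ, ihq, Finset.sum_range_succ, htj]
        simp only [Nat.add_sub_cancel]
        linear_combination x ((n:ℤ) - j) * hqrec
      · rw [Finset.sum_range_succ, ihp, Finset.sum_range_succ, htj]
        simp only [Nat.add_sub_cancel]
        linear_combination x ((n:ℤ) - j) * hprec
  obtain ⟨hq, hp⟩ := key k hk le_rfl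
  have hk1 : k - 1 + 1 = k := by omega
  have hbk : ρ * coefq b ρ (k-1) + b k = 0 := by
    have h := coefq_succ b ρ (k-1)
    rw [hk1] at h
    rw [← h]; exact hqk
  have hak : ρ * coefp a ρ (k-1) - a k = 0 := by
    have h := coefp_succ a ρ (k-1)
    rw [hk1] at h
    rw [← h]; exact hpk
  have hqsum : ∑ i ∈ range k, coefq b ρ i * t (n - i)
      = ∑ i ∈ range (k+1), b i * x (n - i) := by
    rw [hq, Finset.sum_range_succ]
    linear_combination (-(x ((n:ℤ) - k))) * hbk
  have hpsum : ∑ i ∈ range k, coefp a ρ i * t (n - i)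
      = ρ * x n - ∑ i ∈ range (k+1), a i * x (n - i) := by
    rw [hp, Finset.sum_range_succ]
    linear_combination (-(x ((n:ℤ) - k))) * hak
  have hx1 : x (n + 1) = ρ * x n + t (n + 1) := by
    rw [hx (n+1) (by omega)]
    ring_nf
  rw [hx1, ht n hn, hqsum, hpsum]
  ring
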